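/- If a constant game A is static and Φ is a legal position of A, then the game ⟨Φ⟩A (prefixation of A by Φ), defined by Lr_{⟨Φ⟩A} = {Γ : ⟨Φ, Γ⟩ ∈ Lr_A} and Wn_{⟨Φ⟩A}(Γ) = Wn_A(⟨Φ, Γ⟩), is also static. -/

import Mathlib

/-- A run: a finite sequence of labmoves; a labmove is a pair (player, move),
player `true` = ⊤ (machine), `false` = ⊥ (environment). -/
abbrev Run (M : Type*) := List (Bool × M)

/-- Indices (0-based positions) of the `q`-labeled moves of a run. -/
def labelIndices {M : Type*} (Γ : Run M) (q : Bool) : List ℕ :=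
  ((List.range Γ.length).zip Γ).filterMap fun x => if x.2.1 = q then some x.1 else none

/-- In `Γ`, the `k`-th `(¬p)`-labeled move occurs strictly earlier (to the
left) than the `n`-th `p`-labeled move (`k`, `n` are 0-based here). -/
def kthPrecedes {M : Type*} (Γ : Run M) (p : Bool) (k n : ℕ) : Prop :=
  ∃ i j, (labelIndices Γ (!p))[k]? = some i ∧ (labelIndices Γ p)[n]? = some j ∧ i < j

/-- `IsDelay p Γ Δ` says that `Δ` is a `p`-delay of `Γ`: (1) same subsequence
of `p`-labeled moves and same subsequence of `(¬p)`-labeled moves; (2) whenever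
the `k`-th `(¬p)`-labeled move precedes the `n`-th `p`-labeled move in `Γ`, the
same holds in `Δ`. -/
def IsDelay {M : Type*} (p : Bool) (Γ Δ : Run M) : Prop :=
  Δ.filter (fun x => x.1 == p) = Γ.filter (fun x => x.1 == p) ∧
  Δ.filter (fun x => x.1 == !p) = Γ.filter (fun x => x.1 == !p) ∧
  ∀ k n, kthPrecedes Γ p k n → kthPrecedes Δ p k n

/-- A constant game: a pair (Lr, Wn) of a set of (legal) runs and a function
assigning to each run a winner (`true` = ⊤, `false` = ⊥). -/
structure ConstGame (M : Type*) where
  Lr : Set (Run M)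
  Wn : Run M → Bool

/-- A constant game is static iff for every player `p` and all runs Γ, Δ such
that Δ is a `p`-delay of Γ: if Γ is won by `p`, then so is Δ. -/
def ConstGame.Static {M : Type*} (A : ConstGame M) : Prop :=
  ∀ (p : Bool) (Γ Δ : Run M), IsDelay p Γ Δ → A.Wn Γ = p → A.Wn Δ = p

/-- Prefixation: the game ⟨Φ⟩A, defined for a legal position Φ of A by
`Lr_{⟨Φ⟩A} = {Γ | ⟨Φ,Γ⟩ ∈ Lr_A}` and `Wn_{⟨Φ⟩A}(Γ) = Wn_A(⟨Φ,Γ⟩)`. -/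
def ConstGame.pre {M : Type*} (A : ConstGame M) (Φ : Run M) : ConstGame M where
  Lr := {Γ | Φ ++ Γ ∈ A.Lr}
  Wn := fun Γ => A.Wn (Φ ++ Γ)

/-! Prefixing both runs by the same labmove preserves the `p`-delay relation: it shifts every
index by one and puts one extra move in front of one of the two label classes. So by induction
on `Φ`, `Φ ++ Δ` is a `p`-delay of `Φ ++ Γ`, and staticity of `A` applies verbatim. -/

section

variable {M : Type*}

lemma labelIndices_cons (a : Bool × M) (Γ : Run M) (q : Bool) :
    labelIndices (a :: Γ) q
      = (if a.1 = q then [0] else []) ++ (labelIndices Γ q).map (· + 1) := by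
  have hshift : ((List.range' 1 Γ.length).zip Γ).filterMap
      (fun x => if x.2.1 = q then some x.1 else none) = (labelIndices Γ q).map (· + 1) := by
    rw [List.range'_eq_map_range, labelIndices, List.map_filterMap, List.zip_map_left,
      List.filterMap_map]
    refine List.filterMap_congr fun x _ => ?_
    by_cases h : x.2.1 = q <;> simp [h, Nat.add_comm]
  rw [← hshift]
  simp only [labelIndices, List.length_cons, List.range_succ_eq_map, List.zip_cons_cons,
    List.filterMap_cons, List.range'_eq_map_range]
  by_cases h : a.1 = q <;> simp [h, Nat.add_comm]

lemma labelIndices_cons_of_eq {a : Bool × M} {q : Bool} (h : a.1 = q) (Γ : Run M) :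
    labelIndices (a :: Γ) q = 0 :: (labelIndices Γ q).map (· + 1) := by
  simp [labelIndices_cons, h]

lemma labelIndices_cons_of_ne {a : Bool × M} {q : Bool} (h : a.1 ≠ q) (Γ : Run M) :
    labelIndices (a :: Γ) q = (labelIndices Γ q).map (· + 1) := by
  simp [labelIndices_cons, h]

lemma length_labelIndices (Γ : Run M) (q : Bool) :
    (labelIndices Γ q).length = (Γ.filter (fun x => x.1 == q)).length := by
  induction Γ with
  | nil => simp [labelIndices]
  | cons a Γ ih =>
    by_cases h : a.1 = q
    · simp [labelIndices_cons_of_eq h, h, ih]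
    · simp [labelIndices_cons_of_ne h, h, ih]

lemma exists_getElem?_map_succ_lt_iff (L₁ L₂ : List ℕ) (k n : ℕ) :
    (∃ i j, (L₁.map (· + 1))[k]? = some i ∧ (L₂.map (· + 1))[n]? = some j ∧ i < j) ↔
      ∃ i j, L₁[k]? = some i ∧ L₂[n]? = some j ∧ i < j := by
  simp only [List.getElem?_map, Option.map_eq_some_iff]
  constructor
  · rintro ⟨_, _, ⟨i, hi, rfl⟩, ⟨j, hj, rfl⟩, hij⟩
    exact ⟨i, j, hi, hj, by omega⟩
  · rintro ⟨i, j, hi, hj, hij⟩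
    exact ⟨_, _, ⟨i, hi, rfl⟩, ⟨j, hj, rfl⟩, by omega⟩

lemma not_kthPrecedes_cons_zero_right {a : Bool × M} {p : Bool} (h : a.1 = p) (Γ : Run M)
    (k : ℕ) : ¬ kthPrecedes (a :: Γ) p k 0 := by
  rintro ⟨i, j, -, hj, hij⟩
  simp [labelIndices_cons_of_eq h] at hj
  omega

lemma kthPrecedes_cons_succ_right {a : Bool × M} {p : Bool} (h : a.1 = p) (Γ : Run M)
    (k n : ℕ) : kthPrecedes (a :: Γ) p k (n + 1) ↔ kthPrecedes Γ p k n := by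
  have hne : a.1 ≠ !p := by simp [h]
  simp only [kthPrecedes, labelIndices_cons_of_eq h, labelIndices_cons_of_ne hne,
    List.getElem?_cons_succ]
  exact exists_getElem?_map_succ_lt_iff _ _ k n

lemma kthPrecedes_cons_zero_left {a : Bool × M} {p : Bool} (h : a.1 = !p) (Γ : Run M) (n : ℕ) :
    kthPrecedes (a :: Γ) p 0 n ↔ n < (labelIndices Γ p).length := by
  have hne : a.1 ≠ p := by simp [h]
  simp only [kthPrecedes, labelIndices_cons_of_eq h, labelIndices_cons_of_ne hne,
    List.getElem?_cons_zero, List.getElem?_map, Option.map_eq_some_iff, Option.some.injEq]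
  constructor
  · rintro ⟨_, _, rfl, ⟨j, hj, rfl⟩, -⟩
    exact (List.getElem?_eq_some_iff.1 hj).1
  · intro hn
    exact ⟨_, _, rfl, ⟨_, List.getElem?_eq_getElem hn, rfl⟩, by omega⟩

lemma kthPrecedes_cons_succ_left {a : Bool × M} {p : Bool} (h : a.1 = !p) (Γ : Run M)
    (k n : ℕ) : kthPrecedes (a :: Γ) p (k + 1) n ↔ kthPrecedes Γ p k n := by
  have hne : a.1 ≠ p := by simp [h]
  simp only [kthPrecedes, labelIndices_cons_of_eq h, labelIndices_cons_of_ne hne,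
    List.getElem?_cons_succ]
  exact exists_getElem?_map_succ_lt_iff _ _ k n

lemma IsDelay.cons {p : Bool} {Γ Δ : Run M} (h : IsDelay p Γ Δ) (a : Bool × M) :
    IsDelay p (a :: Γ) (a :: Δ) := by
  obtain ⟨hp, hnp, hprec⟩ := h
  have hlen : (labelIndices Δ p).length = (labelIndices Γ p).length := by
    rw [length_labelIndices, length_labelIndices, hp]
  refine ⟨by simp [List.filter_cons, hp], by simp [List.filter_cons, hnp], fun k n hkn => ?_⟩
  rcases Bool.eq_or_eq_not a.1 p with ha | ha
  · cases n with
    | zero => exact absurd hkn (not_kthPrecedes_cons_zero_right ha Γ k)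
    | succ n =>
      rw [kthPrecedes_cons_succ_right ha] at hkn ⊢
      exact hprec k n hkn
  · cases k with
    | zero =>
      rw [kthPrecedes_cons_zero_left ha] at hkn ⊢
      exact hlen ▸ hkn
    | succ k =>
      rw [kthPrecedes_cons_succ_left ha] at hkn ⊢
      exact hprec k n hkn

lemma IsDelay.append_left {p : Bool} {Γ Δ : Run M} (h : IsDelay p Γ Δ) (Φ : Run M) :
    IsDelay p (Φ ++ Γ) (Φ ++ Δ) := by
  induction Φ with
  | nil => exact h
  | cons a Φ ih => exact ih.cons a

end

theorem pre_static_general {M : Type*} (A : ConstGame M) (hA : A.Static)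
    (Φ : Run M) : (A.pre Φ).Static :=
  fun p _ _ hdelay => hA p _ _ (hdelay.append_left Φ)

/-- If a constant game A is static and Φ is a legal position (finite legal run)
of A, then the prefixation ⟨Φ⟩A is also static. -/
theorem pre_static {M : Type*} (A : ConstGame M) (hA : A.Static)
    (Φ : Run M) (hΦ : Φ ∈ A.Lr) : (A.pre Φ).Static :=
  pre_static_general A hA Φ
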